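/- For every n ≥ 2 there exists a subgraph independent probability distribution on the simple graphs with vertex set {1,...,n} such that every unordered pair e of distinct vertices has marginal probability Pr[X_e] exactly (1/2)·(1 − tan²(π/(2n))) of being an edge, and every graph in the support of the distribution is disconnected. -/

import Mathlib

open scoped Classical

noncomputable def pr {n : ℕ} (μ : SimpleGraph (Fin n) → ℝ) (P : SimpleGraph (Fin n) → Prop) : ℝ :=
  ∑ G : SimpleGraph (Fin n), if P G then μ G else 0

def IsDist {n : ℕ} (μ : SimpleGraph (Fin n) → ℝ) : Prop :=
  (∀ G, 0 ≤ μ G) ∧ ∑ G : SimpleGraph (Fin n), μ G = 1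

def SubgraphIndep {n : ℕ} (μ : SimpleGraph (Fin n) → ℝ) : Prop :=
  ∀ V W : Set (Fin n), Disjoint V W →
    ∀ (HV : SimpleGraph V) (HW : SimpleGraph W),
      pr μ (fun G => G.induce V = HV ∧ G.induce W = HW)
        = pr μ (fun G => G.induce V = HV) * pr μ (fun G => G.induce W = HW)

/-!
Colour every vertex independently with the complex weights `(1 ± i tan θ) / 2`, `θ = π / (2n)`,
which sum to `1`, and join equally coloured vertices. The complex weight of a colouring is a
product over the vertices, so events depending on disjoint vertex sets are independent for it.
Flipping all colours conjugates the weights and fixes the graph, so such events have real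
weight, and independence survives passing to the real part. That real part is
`cos (θ (#true - #false)) / (2 cos θ) ^ n`: nonnegative, and zero on the two constant colourings,
so the support consists of disjoint unions of two non-empty cliques. Finally
`Pr[u ~ v] = q₊² + q₋² = (1 - tan² θ) / 2`.
-/

open Complex ComplexConjugate

section ProductWeight

variable {ι α R : Type*} [Fintype ι] [DecidableEq ι] [Fintype α] [CommSemiring R]
  {q : α → R}

theorem sum_prod_eq_one (hq : ∑ a, q a = 1) : ∑ s : ι → α, ∏ i, q (s i) = 1 := by
  simp [← Fintype.prod_sum, hq]

theorem sum_prod_mem_mul_prod_eq_pow (hq : ∑ a, q a = 1) (T : Finset ι) (φ : α → R) :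
    ∑ s : ι → α, (∏ i ∈ T, φ (s i)) * ∏ i, q (s i) = (∑ a, φ a * q a) ^ T.card := by
  have hsplit : ∀ s : ι → α, (∏ i ∈ T, φ (s i)) * ∏ i, q (s i)
      = ∏ i, (if i ∈ T then φ (s i) else 1) * q (s i) := by
    intro s
    rw [Finset.prod_mul_distrib, Finset.prod_ite_mem, Finset.univ_inter]
  rw [Finset.sum_congr rfl fun s _ => hsplit s,
    ← Fintype.prod_sum fun i a => (if i ∈ T then φ a else 1) * q a]
  have hfactor : ∀ i, ∑ a, (if i ∈ T then φ a else 1) * q a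
      = if i ∈ T then ∑ a, φ a * q a else 1 := by
    intro i
    split_ifs <;> simp [hq]
  simp_rw [hfactor, Finset.prod_ite_mem, Finset.univ_inter, Finset.prod_const]

theorem sum_boole_apply_eq_apply_mul_prod [DecidableEq α] (hq : ∑ a, q a = 1) {u v : ι}
    (huv : u ≠ v) :
    ∑ s : ι → α, (if s u = s v then 1 else 0) * ∏ i, q (s i) = ∑ a, q a ^ 2 := by
  have hpair : ∀ s : ι → α, (if s u = s v then (1 : R) else 0)
      = ∑ a, ∏ i ∈ {u, v}, if s i = a then 1 else 0 := by
    intro s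
    simp [Finset.prod_pair huv, eq_comm]
  simp_rw [hpair, Finset.sum_mul]
  rw [Finset.sum_comm]
  refine Finset.sum_congr rfl fun a _ => ?_
  rw [sum_prod_mem_mul_prod_eq_pow hq _ fun b => if b = a then 1 else 0, Finset.card_pair huv]
  simp

/-- Swapping the coordinates outside `V` between two colourings preserves the product of
their weights, which lets a sum over pairs of colourings be re-paired. -/
theorem sum_mul_mul_prod_eq_of_eqOn (V : Set ι) [DecidablePred (· ∈ V)] (hq : ∑ a, q a = 1)
    {f g : (ι → α) → R} (hf : ∀ s s', Set.EqOn s s' V → f s = f s')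
    (hg : ∀ s s', Set.EqOn s s' Vᶜ → g s = g s') :
    ∑ s, f s * g s * ∏ i, q (s i) = (∑ s, f s * ∏ i, q (s i)) * ∑ s, g s * ∏ i, q (s i) := by
  let swap : (ι → α) × (ι → α) → (ι → α) × (ι → α) :=
    fun p => (V.piecewise p.1 p.2, V.piecewise p.2 p.1)
  have hswap : Function.Involutive swap := by
    rintro ⟨s, s'⟩
    ext i <;> by_cases hi : i ∈ V <;> simp [swap, hi]
  have hprod : ∀ s s' : ι → α, (∏ i, q (V.piecewise s s' i)) * ∏ i, q (V.piecewise s' s i)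
      = (∏ i, q (s i)) * ∏ i, q (s' i) := by
    intro s s'
    simp_rw [← Finset.prod_mul_distrib]
    refine Finset.prod_congr rfl fun i _ => ?_
    by_cases hi : i ∈ V <;> simp [hi, mul_comm]
  calc ∑ s, f s * g s * ∏ i, q (s i)
      = (∑ s, f s * g s * ∏ i, q (s i)) * ∑ s' : ι → α, ∏ i, q (s' i) := by
        rw [sum_prod_eq_one hq, mul_one]
    _ = ∑ p : (ι → α) × (ι → α), f p.1 * g p.1 * ((∏ i, q (p.1 i)) * ∏ i, q (p.2 i)) := by
        rw [Fintype.sum_mul_sum, ← Fintype.sum_prod_type']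
        simp_rw [mul_assoc]
    _ = ∑ p : (ι → α) × (ι → α), f p.1 * g p.2 * ((∏ i, q (p.1 i)) * ∏ i, q (p.2 i)) := by
        refine Fintype.sum_equiv (hswap.toPerm swap) _ _ fun ⟨s, s'⟩ => ?_
        simp only [Function.Involutive.coe_toPerm, swap, hprod,
          hf _ _ (V.piecewise_eqOn s s'), hg _ _ (V.piecewise_eqOn_compl s' s)]
    _ = (∑ s, f s * ∏ i, q (s i)) * ∑ s, g s * ∏ i, q (s i) := by
        rw [Fintype.sum_mul_sum, ← Fintype.sum_prod_type']
        simp_rw [mul_mul_mul_comm]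

end ProductWeight

section RealPart

variable {ι : Type*} [Fintype ι] [DecidableEq ι] {q : Bool → ℂ}

noncomputable def reWeight (q : Bool → ℂ) (s : ι → Bool) : ℝ := (∏ i, q (s i)).re

theorem sum_mul_reWeight (F : (ι → Bool) → ℝ) :
    ∑ s, F s * reWeight q s = (∑ s, (F s : ℂ) * ∏ i, q (s i)).re := by
  simp [reWeight, Complex.re_sum]

theorem sum_reWeight (hq : ∑ b, q b = 1) : ∑ s : ι → Bool, reWeight q s = 1 := by
  simpa [reWeight, ← Complex.re_sum] using
    congrArg Complex.re (sum_prod_eq_one (ι := ι) hq)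

/-- Flipping all colours conjugates the weight. -/
theorem im_sum_mul_prod_eq_zero (hq : ∀ b, q (!b) = conj (q b)) {F : (ι → Bool) → ℝ}
    (hF : ∀ s, F (fun i => !s i) = F s) : (∑ s, (F s : ℂ) * ∏ i, q (s i)).im = 0 := by
  have hflip : Function.Involutive fun (s : ι → Bool) i => !s i := fun s => by simp
  rw [← Complex.conj_eq_iff_im, map_sum]
  refine Fintype.sum_equiv (hflip.toPerm _) _ _ fun s => ?_
  simp [map_prod, hq, hF]

theorem sum_mul_mul_reWeight_eq (V : Set ι) [DecidablePred (· ∈ V)]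
    (hq₁ : ∑ b, q b = 1) (hq : ∀ b, q (!b) = conj (q b)) {F G : (ι → Bool) → ℝ}
    (hF : ∀ s, F (fun i => !s i) = F s) (hFV : ∀ s s', Set.EqOn s s' V → F s = F s')
    (hGV : ∀ s s', Set.EqOn s s' Vᶜ → G s = G s') :
    ∑ s, F s * G s * reWeight q s = (∑ s, F s * reWeight q s) * ∑ s, G s * reWeight q s := by
  have hfactor := sum_mul_mul_prod_eq_of_eqOn V (q := q) hq₁
    (f := fun s => (F s : ℂ)) (g := fun s => (G s : ℂ))
    (fun s s' h => by rw [hFV s s' h]) (fun s s' h => by rw [hGV s s' h])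
  rw [sum_mul_reWeight (fun s => F s * G s), sum_mul_reWeight, sum_mul_reWeight]
  push_cast
  rw [hfactor, Complex.mul_re, im_sum_mul_prod_eq_zero hq hF, zero_mul, sub_zero]

end RealPart

section ColorWeight

def signedAngle (θ : ℝ) (b : Bool) : ℝ := if b then θ else -θ

noncomputable def colorWeight (θ : ℝ) (b : Bool) : ℂ := (1 + Real.tan (signedAngle θ b) * I) / 2

variable {θ : ℝ}

theorem sum_colorWeight (θ : ℝ) : ∑ b, colorWeight θ b = 1 := by
  simp only [Fintype.sum_bool, colorWeight, signedAngle, if_true, Bool.false_eq_true, if_false,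
    Real.tan_neg, ofReal_neg]
  ring

theorem colorWeight_not (θ : ℝ) (b : Bool) : colorWeight θ (!b) = conj (colorWeight θ b) := by
  simp only [colorWeight, map_div₀, map_add, map_one, map_mul, conj_ofReal, conj_I, map_ofNat]
  cases b <;> simp only [signedAngle, Bool.not_true, Bool.not_false, if_true, if_false,
    Bool.false_eq_true, Real.tan_neg, ofReal_neg] <;> ring

theorem sum_colorWeight_sq (θ : ℝ) :
    ∑ b, colorWeight θ b ^ 2 = ((1 - Real.tan θ ^ 2) / 2 : ℝ) := by
  simp only [Fintype.sum_bool, colorWeight, signedAngle, if_true, Bool.false_eq_true, if_false,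
    Real.tan_neg, ofReal_neg, ofReal_div, ofReal_sub, ofReal_one, ofReal_pow, ofReal_ofNat]
  ring_nf
  rw [I_sq]
  ring

theorem one_add_tan_mul_I {x : ℝ} (hx : Real.cos x ≠ 0) :
    1 + Real.tan x * I = exp (x * I) / Real.cos x := by
  have hx' : (Real.cos x : ℂ) ≠ 0 := ofReal_ne_zero.mpr hx
  rw [eq_div_iff hx', exp_mul_I, ← ofReal_cos, ← ofReal_sin, Real.tan_eq_sin_div_cos, ofReal_div]
  field_simp

theorem colorWeight_eq_exp (hθ : Real.cos θ ≠ 0) (b : Bool) :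
    colorWeight θ b = exp (signedAngle θ b * I) / (2 * Real.cos θ) := by
  have hcos : Real.cos (signedAngle θ b) = Real.cos θ := by
    cases b <;> simp [signedAngle]
  rw [colorWeight, one_add_tan_mul_I (hcos ▸ hθ), hcos]
  ring

variable {ι : Type*} [Fintype ι]

theorem reWeight_colorWeight (hθ : Real.cos θ ≠ 0) (s : ι → Bool) :
    reWeight (colorWeight θ) s
      = Real.cos (∑ i, signedAngle θ (s i)) / (2 * Real.cos θ) ^ Fintype.card ι := by
  simp only [reWeight, colorWeight_eq_exp hθ, Finset.prod_div_distrib, ← Complex.exp_sum,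
    Finset.prod_const, ← Finset.sum_mul, Finset.card_univ]
  rw [← ofReal_sum, show ((2 : ℂ) * Real.cos θ) ^ Fintype.card ι
    = ((2 * Real.cos θ) ^ Fintype.card ι : ℝ) by push_cast; ring, div_ofReal_re,
    exp_ofReal_mul_I_re]

theorem reWeight_colorWeight_nonneg (hθ : 0 ≤ θ) (hcos : 0 < Real.cos θ)
    (hcard : Fintype.card ι * θ ≤ Real.pi / 2) (s : ι → Bool) : 0 ≤ reWeight (colorWeight θ) s := by
  rw [reWeight_colorWeight hcos.ne']
  have hsum : |∑ i, signedAngle θ (s i)| ≤ Fintype.card ι * θ :=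
    calc |∑ i, signedAngle θ (s i)| ≤ ∑ i, |signedAngle θ (s i)| := Finset.abs_sum_le_sum_abs _ _
      _ = Fintype.card ι * θ := by
        simp [signedAngle, apply_ite, abs_of_nonneg hθ, Finset.card_univ]
  have hcos_sum := Real.cos_nonneg_of_mem_Icc (abs_le.mp (hsum.trans hcard))
  positivity

theorem reWeight_colorWeight_const (hcos : Real.cos θ ≠ 0)
    (hcard : Fintype.card ι * θ = Real.pi / 2) (b : Bool) :
    reWeight (colorWeight θ) (fun _ : ι => b) = 0 := by
  rw [reWeight_colorWeight hcos, Finset.sum_const, Finset.card_univ, nsmul_eq_mul]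
  cases b <;> simp [signedAngle, hcard, Real.cos_pi_div_two]

end ColorWeight

section SameColorGraph

variable {V β : Type*}

def sameColorGraph (s : V → β) : SimpleGraph V where
  Adj u v := u ≠ v ∧ s u = s v
  symm := ⟨fun _ _ h => ⟨h.1.symm, h.2.symm⟩⟩
  loopless := ⟨fun _ h => h.1 rfl⟩

@[simp]
theorem sameColorGraph_adj {s : V → β} {u v : V} :
    (sameColorGraph s).Adj u v ↔ u ≠ v ∧ s u = s v :=
  Iff.rfl

theorem induce_sameColorGraph (W : Set V) (s : V → β) :
    (sameColorGraph s).induce W = sameColorGraph (W.domRestrict s) := by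
  ext u v
  simp [Subtype.ext_iff, Set.domRestrict_apply]

theorem induce_sameColorGraph_eq_of_eqOn {W : Set V} {s s' : V → β} (h : Set.EqOn s s' W) :
    (sameColorGraph s).induce W = (sameColorGraph s').induce W := by
  rw [induce_sameColorGraph, induce_sameColorGraph, Set.domRestrict_eq_domRestrict_iff.mpr h]

theorem sameColorGraph_comp {γ : Type*} {f : β → γ} (hf : Function.Injective f) (s : V → β) :
    sameColorGraph (f ∘ s) = sameColorGraph s := by
  ext u v
  simp [hf.eq_iff]

theorem SimpleGraph.Reachable.apply_eq_of_sameColorGraph {s : V → β} {u v : V}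
    (h : (sameColorGraph s).Reachable u v) : s u = s v := by
  obtain ⟨p⟩ := h
  induction p with
  | nil => rfl
  | cons hadj _ ih => exact hadj.2.trans ih

theorem not_connected_sameColorGraph {s : V → β} {u v : V} (h : s u ≠ s v) :
    ¬ (sameColorGraph s).Connected :=
  fun hconn => h (hconn.preconnected u v).apply_eq_of_sameColorGraph

end SameColorGraph

section Pushforward

variable {n : ℕ} {β : Type*} [Fintype β] {w : β → ℝ} {Γ : β → SimpleGraph (Fin n)}

noncomputable def pushforward (w : β → ℝ) (Γ : β → SimpleGraph (Fin n))
    (G : SimpleGraph (Fin n)) : ℝ :=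
  ∑ b, if Γ b = G then w b else 0

theorem pr_pushforward (P : SimpleGraph (Fin n) → Prop) :
    pr (pushforward w Γ) P = ∑ b, if P (Γ b) then w b else 0 := by
  have hswap : ∀ G, (if P G then ∑ b, (if Γ b = G then w b else 0) else (0 : ℝ))
      = ∑ b, if Γ b = G then (if P (Γ b) then w b else 0) else 0 := by
    intro G
    by_cases hP : P G <;> simp +contextual [hP]
  simp only [pr, pushforward, hswap]
  rw [Finset.sum_comm]
  simp

theorem isDist_pushforward (hw₀ : ∀ b, 0 ≤ w b) (hw₁ : ∑ b, w b = 1) :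
    IsDist (pushforward w Γ) := by
  refine ⟨fun G => Finset.sum_nonneg fun b _ => ite_nonneg (hw₀ b) le_rfl, ?_⟩
  simp only [pushforward]
  rw [Finset.sum_comm]
  simpa using hw₁

theorem exists_of_pushforward_pos {G : SimpleGraph (Fin n)} (hG : 0 < pushforward w Γ G) :
    ∃ b, Γ b = G ∧ 0 < w b := by
  obtain ⟨b, -, hb⟩ := Finset.exists_lt_of_sum_lt (f := fun _ => (0 : ℝ))
    (by simpa [pushforward] using hG)
  by_cases hbG : Γ b = G
  · exact ⟨b, hbG, by simpa [hbG] using hb⟩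
  · simp [hbG] at hb

end Pushforward

section TwoCliqueDist

variable {n : ℕ} {θ : ℝ}

noncomputable def twoCliqueDist (n : ℕ) (θ : ℝ) : SimpleGraph (Fin n) → ℝ :=
  pushforward (reWeight (colorWeight θ)) sameColorGraph

theorem isDist_twoCliqueDist (hθ : 0 ≤ θ) (hcos : 0 < Real.cos θ) (hnθ : n * θ ≤ Real.pi / 2) :
    IsDist (twoCliqueDist n θ) :=
  isDist_pushforward
    (reWeight_colorWeight_nonneg hθ hcos (by simpa using hnθ))
    (sum_reWeight (sum_colorWeight θ))

theorem subgraphIndep_twoCliqueDist (n : ℕ) (θ : ℝ) : SubgraphIndep (twoCliqueDist n θ) := by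
  intro V W hVW HV HW
  let F : (Fin n → Bool) → ℝ := fun s => if (sameColorGraph s).induce V = HV then 1 else 0
  let G : (Fin n → Bool) → ℝ := fun s => if (sameColorGraph s).induce W = HW then 1 else 0
  have hflip : ∀ s : Fin n → Bool, sameColorGraph (fun i => !s i) = sameColorGraph s :=
    sameColorGraph_comp Bool.not_injective
  have hindep := sum_mul_mul_reWeight_eq V (sum_colorWeight θ) (colorWeight_not θ)
    (F := F) (G := G) (fun s => by simp only [F, hflip])
    (fun s s' h => by simp only [F, induce_sameColorGraph_eq_of_eqOn h])
    (fun s s' h => by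
      simp only [G, induce_sameColorGraph_eq_of_eqOn (h.mono hVW.subset_compl_left)])
  simp only [F, G, boole_mul, ← ite_and] at hindep
  simp only [twoCliqueDist, pr_pushforward]
  convert hindep

theorem pr_adj_twoCliqueDist (θ : ℝ) {u v : Fin n} (huv : u ≠ v) :
    pr (twoCliqueDist n θ) (fun G => G.Adj u v) = (1 / 2) * (1 - Real.tan θ ^ 2) := by
  have hprob := sum_boole_apply_eq_apply_mul_prod (sum_colorWeight θ) huv
  simp only [twoCliqueDist, pr_pushforward, sameColorGraph_adj, huv, ne_eq, not_false_eq_true,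
    true_and]
  rw [Finset.sum_congr rfl fun s _ => (boole_mul (s u = s v) _).symm, sum_mul_reWeight]
  simp only [apply_ite ofReal, ofReal_one, ofReal_zero]
  rw [hprob, sum_colorWeight_sq, ofReal_re]
  ring

theorem not_connected_of_twoCliqueDist_pos (hcos : Real.cos θ ≠ 0) (hnθ : n * θ = Real.pi / 2)
    {G : SimpleGraph (Fin n)} (hG : 0 < twoCliqueDist n θ G) : ¬ G.Connected := by
  obtain ⟨s, rfl, hs⟩ := exists_of_pushforward_pos hG
  suffices ∃ u v, s u ≠ s v by
    obtain ⟨u, v, huv⟩ := this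
    exact not_connected_sameColorGraph huv
  by_contra! hconst
  have : NeZero n := ⟨by rintro rfl; simp at hnθ; linarith [Real.pi_pos]⟩
  have hs_const : s = fun _ => s 0 := funext fun i => hconst i 0
  rw [hs_const, reWeight_colorWeight_const hcos (by simpa using hnθ)] at hs
  exact hs.false

end TwoCliqueDist

theorem subgraph_indep_lower_bound (n : ℕ) (hn : 2 ≤ n) :
    ∃ μ : SimpleGraph (Fin n) → ℝ, IsDist μ ∧ SubgraphIndep μ ∧
      (∀ u v : Fin n, u ≠ v →
        pr μ (fun G => G.Adj u v)
          = (1 / 2) * (1 - Real.tan (Real.pi / (2 * n)) ^ 2)) ∧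
      (∀ G, 0 < μ G → ¬ G.Connected) := by
  set θ := Real.pi / (2 * n)
  have hn' : (2 : ℝ) ≤ n := by exact_mod_cast hn
  have hθ : 0 < θ := by positivity
  have hnθ : n * θ = Real.pi / 2 := by
    simp only [θ]
    field_simp
  have hcos : 0 < Real.cos θ := by
    refine Real.cos_pos_of_mem_Ioo ⟨by linarith [Real.pi_pos], ?_⟩
    nlinarith [Real.pi_pos]
  exact ⟨twoCliqueDist n θ, isDist_twoCliqueDist hθ.le hcos hnθ.le,
    subgraphIndep_twoCliqueDist n θ, fun u v huv => pr_adj_twoCliqueDist θ huv,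
    fun G hG => not_connected_of_twoCliqueDist_pos hcos.ne' hnθ hG⟩
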